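/- arXiv:1010.3751 — 3 statements merged into one kernel-verified Lean document; each statement's English description precedes it below -/
import Mathlib

section
/- Let S ⊆ ℕ contain 0, be closed under addition, and have finite nonempty complement G := ℕ \ S. Set k := |G| and F := max G. Then F = 2k − 1 if and only if S is symmetric, i.e. for every natural number n with n ≤ F, one has n ∈ S if and only if F − n ∉ S. -/
/-- A numerical semigroup `S ⊆ ℕ` (containing `0`, closed under addition, with finite
nonempty complement `G`) with `k = |G|` gaps and Frobenius number `F = max G` satisfies
`F = 2k − 1` if and only if `S` is symmetric: for all `n ≤ F`, `n ∈ S ↔ F − n ∉ S`. -/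
theorem gorenstein_iff_symmetric (S : Set ℕ) (h0 : 0 ∈ S)
    (hadd : ∀ a ∈ S, ∀ b ∈ S, a + b ∈ S)
    (hfin : Sᶜ.Finite) (hne : Sᶜ.Nonempty)
    (k F : ℕ) (hk : Sᶜ.ncard = k) (hF : IsGreatest Sᶜ F) :
    F = 2 * k - 1 ↔ ∀ n ≤ F, (n ∈ S ↔ F - n ∉ S) := by
  classical
  have hFc : F ∉ S := hF.1
  have hub : ∀ g, g ∉ S → g ≤ F := fun g hg => hF.2 hg
  set T : Finset ℕ := hfin.toFinset with hT
  have hmemT : ∀ n, n ∈ T ↔ n ∉ S := fun n => by simp [hT]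
  have hTcard : T.card = k := by
    rw [← hk, Set.ncard_eq_toFinset_card _ hfin]
  set R : Finset ℕ := Finset.range (F + 1) with hR
  have hTsub : T ⊆ R := by
    intro g hg
    rw [hmemT] at hg
    simp [hR, Nat.lt_succ_iff, hub g hg]
  have hkpos : 1 ≤ k := by
    rw [← hTcard]
    obtain ⟨g, hg⟩ := hne
    exact Finset.card_pos.mpr ⟨g, (hmemT g).mpr hg⟩
  have hkF : k ≤ F + 1 := by
    have := Finset.card_le_card hTsub
    simpa [hTcard, hR] using this
  have keyA : ∀ n ≤ F, n ∈ S → F - n ∉ S := by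
    intro n hn hnS hFn
    have : n + (F - n) ∈ S := hadd n hnS (F - n) hFn
    rw [Nat.add_sub_cancel' hn] at this
    exact hFc this
  constructor
  · intro hFk
    have hF1 : F + 1 = 2 * k := by omega
    have hBcard : (R \ T).card = k := by
      rw [Finset.card_sdiff_of_subset hTsub, hTcard, hR, Finset.card_range]
      omega
    have hinj : Set.InjOn (fun n => F - n) (R \ T : Finset ℕ) := by
      intro a ha b hb hab
      simp [hR, Nat.lt_succ_iff] at ha hb
      simp at hab
      omega
    have himg : (R \ T).image (fun n => F - n) = T := by
      apply Finset.eq_of_subset_of_card_le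
      · intro m hm
        simp only [Finset.mem_image, Finset.mem_sdiff, hR, Finset.mem_range,
          Nat.lt_succ_iff] at hm
        obtain ⟨a, ⟨haF, haT⟩, rfl⟩ := hm
        rw [hmemT] at haT ⊢
        push_neg at haT
        exact keyA a haF haT
      · rw [Finset.card_image_of_injOn hinj, hBcard, hTcard]
    intro n hn
    constructor
    · exact fun hnS => keyA n hn hnS
    · intro hFn
      by_contra hnS
      have hnT : n ∈ T := (hmemT n).mpr hnS
      rw [← himg] at hnT
      simp only [Finset.mem_image, Finset.mem_sdiff, hR, Finset.mem_range,
        Nat.lt_succ_iff] at hnT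
      obtain ⟨a, ⟨haF, haT⟩, rfl⟩ := hnT
      rw [hmemT] at haT
      push_neg at haT
      have : F - (F - a) = a := by omega
      rw [this] at hFn
      exact hFn haT
  · intro hsym
    have hinj : Set.InjOn (fun n => F - n) (T : Finset ℕ) := by
      intro a ha b hb hab
      simp only [Finset.mem_coe] at ha hb
      have haF := hub a ((hmemT a).mp ha)
      have hbF := hub b ((hmemT b).mp hb)
      simp at hab
      omega
    have himg : T.image (fun n => F - n) = R \ T := by
      ext m
      simp only [Finset.mem_image, Finset.mem_sdiff, hR, Finset.mem_range,
        Nat.lt_succ_iff, hmemT]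
      constructor
      · rintro ⟨a, haT, rfl⟩
        have haF := hub a haT
        have : F - a ∈ S := by
          by_contra h
          exact haT ((hsym a haF).mpr h)
        exact ⟨Nat.sub_le F a, fun h => h this⟩
      · rintro ⟨hmF, hmS⟩
        push_neg at hmS
        have hFm : F - m ∉ S := (hsym m hmF).mp hmS
        refine ⟨F - m, hFm, by omega⟩
    have := Finset.card_image_of_injOn hinj
    rw [himg, Finset.card_sdiff_of_subset hTsub, hTcard, hR, Finset.card_range] at this
    omega
end

section
/- Let p, q ≥ 2 be coprime natural numbers with (p−1)(q−1) ≥ 4, let F := pq − p − q, and let G(p,q) := {n ∈ ℕ : n is not of the form p·i + q·j with i, j ∈ ℕ}. Then Σ_{j ∈ {0,…,2F−2} \ G(p,q)} (2F − j) = F² + (p−1)(q−1)(2pq − p − q − 1)/12 − 1. -/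
open Finset


private lemma perm_sum {M : Type*} [AddCommMonoid M] (p q : ℕ) (hp : 0 < p)
    (hpq : Nat.gcd p q = 1) (f : ℕ → M) :
    ∑ t ∈ range p, f (q * t % p) = ∑ t ∈ range p, f t := by
  have hinj : ∀ x ∈ range p, ∀ y ∈ range p, q * x % p = q * y % p → x = y := by
    intro x hx y hy h
    simp only [mem_range] at hx hy
    have h2 : x % p = y % p := Nat.ModEq.cancel_left_of_coprime hpq h
    rwa [Nat.mod_eq_of_lt hx, Nat.mod_eq_of_lt hy] at h2
  have himg : (range p).image (fun t => q * t % p) = range p := by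
    apply eq_of_subset_of_card_le
    · intro x hx
      simp only [mem_image, mem_range] at hx ⊢
      obtain ⟨t, _, rfl⟩ := hx
      exact Nat.mod_lt _ hp
    · rw [card_image_of_injOn (fun x hx y hy => hinj x hx y hy)]
  conv_rhs => rw [← himg]
  rw [Finset.sum_image hinj]

private lemma sum_id_int (n : ℕ) : (∑ t ∈ range n, (t : ℤ)) * 2 = n * (n - 1) := by
  induction n with
  | zero => simp
  | succ m ih =>
    rw [Finset.sum_range_succ]
    push_cast
    linear_combination ih

private lemma sum_sq_int (n : ℕ) : (∑ t ∈ range n, (t : ℤ)^2) * 6 = n * (n - 1) * (2 * n - 1) := by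
  induction n with
  | zero => simp
  | succ m ih =>
    rw [Finset.sum_range_succ]
    push_cast
    linear_combination ih

private lemma sum_icc_int (m : ℕ) : (∑ k ∈ Icc 1 m, (k : ℤ)) * 2 = m * (m + 1) := by
  have h : range (m + 1) = insert 0 (Icc 1 m) := by
    ext x; simp; omega
  have := sum_id_int (m + 1)
  rw [h, Finset.sum_insert (by simp)] at this
  push_cast at this
  linarith

private lemma range_eq_insert_icc (p : ℕ) (hp : 0 < p) :
    range p = insert 0 (Icc 1 (p - 1)) := by
  ext x; simp; omega


private lemma nonrep_le_F (p q : ℕ) (hp : 2 ≤ p) (hq : 2 ≤ q) (hpq : Nat.Coprime p q)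
    (n : ℕ) (h : ¬ ∃ i j : ℕ, n = p * i + q * j) : n ≤ p * q - p - q := by
  have frob := frobeniusNumber_pair hpq hp hq
  apply frob.2
  rw [Set.mem_setOf_eq, AddSubmonoid.mem_closure_pair]
  rintro ⟨a, b, hab⟩
  refine h ⟨a, b, ?_⟩
  simp only [smul_eq_mul] at hab
  rw [mul_comm p a, mul_comm q b]
  exact hab.symm

private lemma nonrep_iff (p q : ℕ) (hp : 2 ≤ p) (hq : 2 ≤ q) (hpq : Nat.Coprime p q)
    (n : ℕ) :
    (¬ ∃ i j : ℕ, n = p * i + q * j) ↔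
      ∃ t ∈ Icc 1 (p - 1), ∃ k ∈ Icc 1 (q * t / p), n = q * t - p * k := by
  have hp0 : 0 < p := by omega
  constructor
  · intro h
    haveI : NeZero p := ⟨by omega⟩
    have hu : IsUnit (q : ZMod p) := (ZMod.isUnit_iff_coprime q p).mpr hpq.symm
    obtain ⟨t, htp, hmod⟩ : ∃ t, t < p ∧ q * t ≡ n [MOD p] := by
      refine ⟨((q : ZMod p)⁻¹ * (n : ZMod p)).val, ZMod.val_lt _, ?_⟩
      apply (ZMod.natCast_eq_natCast_iff _ _ _).mp
      push_cast
      rw [ZMod.natCast_rightInverse, ← mul_assoc, ZMod.mul_inv_of_unit _ hu, one_mul]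
    have ht0 : t ≠ 0 := by
      rintro rfl
      have : (0 : ℕ) ≡ n [MOD p] := by simpa using hmod
      have hdvd : p ∣ n := (Nat.modEq_zero_iff_dvd).mp this.symm
      exact h ⟨n / p, 0, by rw [Nat.mul_div_cancel' hdvd]; omega⟩
    have hlt : n < q * t := by
      by_contra hge
      push_neg at hge
      have hdvd : p ∣ n - q * t := (Nat.modEq_iff_dvd' hge).mp hmod
      obtain ⟨c, hc⟩ := hdvd
      exact h ⟨c, t, by omega⟩
    have hdvd : p ∣ q * t - n := (Nat.modEq_iff_dvd' hlt.le).mp hmod.symm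
    refine ⟨t, by simp [mem_Icc]; omega, (q * t - n) / p, ?_, ?_⟩
    · rw [mem_Icc]
      constructor
      · rw [Nat.one_le_div_iff hp0]
        exact Nat.le_of_dvd (by omega) hdvd
      · apply Nat.div_le_div_right
        omega
    · rw [Nat.mul_div_cancel' hdvd]
      omega
  · rintro ⟨t, htm, k, hkm, rfl⟩ ⟨i, j, hij⟩
    rw [mem_Icc] at htm hkm
    have hpk : p * k ≤ q * t := by
      calc p * k ≤ p * (q * t / p) := Nat.mul_le_mul_left p hkm.2
      _ ≤ q * t := Nat.mul_div_le _ _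
    have hqj : q * j + p * i + p * k = q * t := by omega
    have hjt : j < t := by
      have h1 : q * j < q * t := by
        have : 0 < p * k := Nat.mul_pos hp0 (by omega)
        omega
      exact lt_of_mul_lt_mul_left h1 (Nat.zero_le q)
    have hmod : q * j ≡ q * t [MOD p] := by
      rw [Nat.modEq_iff_dvd' (by omega)]
      exact ⟨i + k, by rw [Nat.mul_add]; omega⟩
    have h2 : j % p = t % p := Nat.ModEq.cancel_left_of_coprime hpq hmod
    rw [Nat.mod_eq_of_lt (by omega), Nat.mod_eq_of_lt (by omega)] at h2
    omega


private lemma gap_sum_eq {M : Type*} [AddCommMonoid M] (p q : ℕ) (hp : 2 ≤ p) (hq : 2 ≤ q)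
    (hpq : Nat.Coprime p q)
    [DecidablePred fun n : ℕ => ∃ i j : ℕ, n = p * i + q * j] (f : ℕ → M)
    (hiff : ∀ n : ℕ, (¬ ∃ i j : ℕ, n = p * i + q * j) ↔
      ∃ t ∈ Icc 1 (p - 1), ∃ k ∈ Icc 1 (q * t / p), n = q * t - p * k)
    (hle : ∀ n : ℕ, (¬ ∃ i j : ℕ, n = p * i + q * j) → n ≤ p * q - p - q) :
    ∑ n ∈ (range (p * q - p - q + 1)).filter (fun n => ¬ ∃ i j : ℕ, n = p * i + q * j), f n
      = ∑ t ∈ Icc 1 (p - 1), ∑ k ∈ Icc 1 (q * t / p), f (q * t - p * k) := by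
  have hp0 : 0 < p := by omega
  have hkey : ∀ t ∈ Icc 1 (p - 1), ∀ k ∈ Icc 1 (q * t / p), p * k ≤ q * t := by
    intro t ht k hk
    rw [mem_Icc] at hk
    calc p * k ≤ p * (q * t / p) := Nat.mul_le_mul_left p hk.2
    _ ≤ q * t := Nat.mul_div_le _ _
  have hset : (range (p * q - p - q + 1)).filter (fun n => ¬ ∃ i j : ℕ, n = p * i + q * j)
      = (Icc 1 (p - 1)).biUnion (fun t => (Icc 1 (q * t / p)).image (fun k => q * t - p * k)) := by
    ext n
    simp only [mem_filter, mem_range, mem_biUnion, mem_image]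
    constructor
    · rintro ⟨-, hn⟩
      obtain ⟨t, ht, k, hk, rfl⟩ := (hiff n).mp hn
      exact ⟨t, ht, k, hk, rfl⟩
    · rintro ⟨t, ht, k, hk, rfl⟩
      have hn : ¬ ∃ i j : ℕ, q * t - p * k = p * i + q * j :=
        (hiff _).mpr ⟨t, ht, k, hk, rfl⟩
      exact ⟨by have := hle _ hn; omega, hn⟩
  rw [hset, Finset.sum_biUnion, Finset.sum_congr rfl]
  · intro t ht
    rw [Finset.sum_image]
    intro x hx y hy hxy
    have hx' := hkey t ht x hx
    have hy' := hkey t ht y hy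
    have : p * x = p * y := by beta_reduce at hxy; omega
    exact Nat.eq_of_mul_eq_mul_left hp0 this
  · -- pairwise disjoint
    intro a ha b hb hab
    simp only [Finset.disjoint_left]
    intro x hx hx'
    simp only [mem_coe, mem_Icc] at ha hb
    simp only [mem_image] at hx hx'
    obtain ⟨k, hk, hxa⟩ := hx
    obtain ⟨k', hk', hxb⟩ := hx'
    have hka := hkey a (by rw [mem_Icc]; exact ha) k hk
    have hkb := hkey b (by rw [mem_Icc]; exact hb) k' hk'
    have hma : x ≡ q * a [MOD p] := by
      rw [Nat.modEq_iff_dvd' (by omega)]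
      exact ⟨k, by omega⟩
    have hmb : x ≡ q * b [MOD p] := by
      rw [Nat.modEq_iff_dvd' (by omega)]
      exact ⟨k', by omega⟩
    have h2 : a % p = b % p :=
      Nat.ModEq.cancel_left_of_coprime hpq (hma.symm.trans hmb)
    rw [Nat.mod_eq_of_lt (by omega), Nat.mod_eq_of_lt (by omega)] at h2
    exact hab h2

-- the ℤ computation for the card
private lemma zcard (p q : ℕ) (hp : 2 ≤ p) (hq : 2 ≤ q) (hpq : Nat.Coprime p q) :
    (∑ t ∈ Icc 1 (p - 1), ((q * t / p : ℕ) : ℤ)) * (2 * p) = (p * (p - 1)) * ((q : ℤ) - 1) := by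
  have hp0 : 0 < p := by omega
  have hterm : ∀ t ∈ Icc 1 (p - 1), (p : ℤ) * ((q * t / p : ℕ) : ℤ)
      = ((q * t : ℕ) : ℤ) - ((q * t % p : ℕ) : ℤ) := by
    intro t _
    have hdm : p * (q * t / p) + q * t % p = q * t := Nat.div_add_mod _ _
    have := congrArg (Nat.cast : ℕ → ℤ) hdm
    push_cast at this ⊢
    linarith
  have hstep : (p : ℤ) * ∑ t ∈ Icc 1 (p - 1), ((q * t / p : ℕ) : ℤ)
      = ∑ t ∈ range p, (((q * t : ℕ) : ℤ) - ((q * t % p : ℕ) : ℤ)) := by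
    rw [Finset.mul_sum, Finset.sum_congr rfl hterm,
      range_eq_insert_icc p hp0, Finset.sum_insert (by simp)]
    simp
  have hperm1 : ∑ t ∈ range p, ((q * t % p : ℕ) : ℤ) = ∑ t ∈ range p, (t : ℤ) :=
    perm_sum p q hp0 hpq (fun n => (n : ℤ))
  have hq1 : ∑ t ∈ range p, ((q * t : ℕ) : ℤ) = (q : ℤ) * ∑ t ∈ range p, (t : ℤ) := by
    rw [Finset.mul_sum]
    apply Finset.sum_congr rfl
    intro t _
    push_cast
    ring
  rw [Finset.sum_sub_distrib, hperm1, hq1] at hstep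
  have hT1 := sum_id_int p
  linear_combination 2 * hstep + ((q:ℤ) - 1) * hT1

private lemma zsum (p q : ℕ) (hp : 2 ≤ p) (hq : 2 ≤ q) (hpq : Nat.Coprime p q) :
    (∑ t ∈ Icc 1 (p - 1), ∑ k ∈ Icc 1 (q * t / p), ((q * t - p * k : ℕ) : ℤ)) * (12 * p)
      = (p : ℤ) * (p - 1) * ((q : ℤ) - 1) * (2 * p * q - p - q - 1) := by
  have hp0 : 0 < p := by omega
  have hE : ∀ t ∈ Icc 1 (p - 1),
      (p : ℤ) * (2 * ∑ k ∈ Icc 1 (q * t / p), ((q * t - p * k : ℕ) : ℤ))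
        = ((q * t : ℕ) : ℤ)^2 - ((q * t % p : ℕ) : ℤ)^2
          - p * ((q * t : ℕ) : ℤ) + p * ((q * t % p : ℕ) : ℤ) := by
    intro t _
    set m : ℕ := q * t / p with hmdef
    have hm := sum_icc_int m
    have hdm' : p * m + q * t % p = q * t := Nat.div_add_mod _ _
    have hdm : (p : ℤ) * (m : ℤ) + ((q * t % p : ℕ) : ℤ) = ((q * t : ℕ) : ℤ) := by
      exact_mod_cast congrArg (Nat.cast : ℕ → ℤ) hdm'
    have hinner : ∑ k ∈ Icc 1 m, ((q * t - p * k : ℕ) : ℤ)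
        = (m : ℤ) * ((q * t : ℕ) : ℤ) - p * ∑ k ∈ Icc 1 m, (k : ℤ) := by
      have hterm : ∀ k ∈ Icc 1 m, ((q * t - p * k : ℕ) : ℤ)
          = ((q * t : ℕ) : ℤ) - (p : ℤ) * (k : ℤ) := by
        intro k hk
        rw [mem_Icc] at hk
        have hpk : p * k ≤ q * t := by
          calc p * k ≤ p * m := Nat.mul_le_mul_left p hk.2
          _ ≤ q * t := by omega
        push_cast [Nat.cast_sub hpk]
        ring
      rw [Finset.sum_congr rfl hterm, Finset.sum_sub_distrib, Finset.sum_const, Nat.card_Icc,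
        ← Finset.mul_sum]
      simp [nsmul_eq_mul]
    rw [hinner]
    linear_combination (-(p:ℤ)^2) * hm
      + (((q * t : ℕ) : ℤ) + ((q * t % p : ℕ) : ℤ) - (p:ℤ) * (m:ℤ) - (p:ℤ)) * hdm
  have hstep : (p : ℤ) * (2 * ∑ t ∈ Icc 1 (p - 1), ∑ k ∈ Icc 1 (q * t / p), ((q * t - p * k : ℕ) : ℤ))
      = ∑ t ∈ range p, (((q * t : ℕ) : ℤ)^2 - ((q * t % p : ℕ) : ℤ)^2
          - p * ((q * t : ℕ) : ℤ) + p * ((q * t % p : ℕ) : ℤ)) := by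
    have h0 : ∑ t ∈ range p, (((q * t : ℕ) : ℤ)^2 - ((q * t % p : ℕ) : ℤ)^2
          - p * ((q * t : ℕ) : ℤ) + p * ((q * t % p : ℕ) : ℤ))
        = ∑ t ∈ Icc 1 (p - 1), (((q * t : ℕ) : ℤ)^2 - ((q * t % p : ℕ) : ℤ)^2
          - p * ((q * t : ℕ) : ℤ) + p * ((q * t % p : ℕ) : ℤ)) := by
      rw [range_eq_insert_icc p hp0, Finset.sum_insert (by simp)]
      simp
    rw [h0, ← Finset.sum_congr rfl hE, ← Finset.mul_sum, ← Finset.mul_sum]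
  have hperm1 : ∑ t ∈ range p, ((q * t % p : ℕ) : ℤ) = ∑ t ∈ range p, (t : ℤ) :=
    perm_sum p q hp0 hpq (fun n => (n : ℤ))
  have hperm2 : ∑ t ∈ range p, ((q * t % p : ℕ) : ℤ)^2 = ∑ t ∈ range p, (t : ℤ)^2 :=
    perm_sum p q hp0 hpq (fun n => ((n : ℕ) : ℤ)^2)
  have hA2 : ∑ t ∈ range p, ((q * t : ℕ) : ℤ)^2 = (q : ℤ)^2 * ∑ t ∈ range p, (t : ℤ)^2 := by
    rw [Finset.mul_sum]
    apply Finset.sum_congr rfl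
    intro t _
    push_cast
    ring
  have hA1 : ∑ t ∈ range p, ((q * t : ℕ) : ℤ) = (q : ℤ) * ∑ t ∈ range p, (t : ℤ) := by
    rw [Finset.mul_sum]
    apply Finset.sum_congr rfl
    intro t _
    push_cast
    ring
  rw [Finset.sum_add_distrib, Finset.sum_sub_distrib, Finset.sum_sub_distrib,
    ← Finset.mul_sum, ← Finset.mul_sum, hperm1, hperm2, hA1, hA2] at hstep
  have hT1 := sum_id_int p
  have hT2 := sum_sq_int p
  linear_combination 6 * hstep + ((q:ℤ)^2 - 1) * hT2 + (-3*(p:ℤ)*((q:ℤ)-1)) * hT1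


set_option maxHeartbeats 1000000 in
/-- Character `χ₂` of the toric singularity `xᵖ = y^q` (`p, q ≥ 2` coprime, genus `≥ 2`):
with `F = pq − p − q` and `G(p,q)` the gap set,
`Σ_{j ∈ {0,…,2F−2} \ G(p,q)} (2F − j) = F² + (p−1)(q−1)(2pq − p − q − 1)/12 − 1`. -/
theorem toric_chi2 (p q : ℕ) (hp : 2 ≤ p) (hq : 2 ≤ q) (hpq : Nat.Coprime p q)
    (hg : 4 ≤ (p - 1) * (q - 1)) (F : ℕ) (hF : F = p * q - p - q)
    (G : Set ℕ) (hG : G = {n : ℕ | ¬ ∃ i j : ℕ, n = p * i + q * j}) :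
    (∑ᶠ j ∈ ({j : ℕ | j ≤ 2 * F - 2} \ G), (2 * F - j)) =
      F ^ 2 + (p - 1) * (q - 1) * (2 * p * q - p - q - 1) / 12 - 1 := by
  classical
  subst hG
  have hp0 : 0 < p := by omega
  have hpq' : p + q ≤ p * q := Nat.add_le_mul hp hq
  have hprod : (p - 1) * (q - 1) + p + q = p * q + 1 := by
    cases p with
    | zero => omega
    | succ p' =>
      cases q with
      | zero => omega
      | succ q' =>
        simp only [Nat.succ_sub_one]
        ring
  have hF1 : F + 1 = (p - 1) * (q - 1) := by omega
  have hF3 : 3 ≤ F := by omega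
  have hiff := nonrep_iff p q hp hq hpq
  have hle := nonrep_le_F p q hp hq hpq
  simp only [← hF] at hle
  -- the finsets
  set NF : Finset ℕ := (Finset.range (2 * F - 1)).filter (fun n => ∃ i j : ℕ, n = p * i + q * j)
    with hNF
  set GF : Finset ℕ := (Finset.range (F + 1)).filter (fun n => ¬ ∃ i j : ℕ, n = p * i + q * j)
    with hGF
  -- Step A : finsum to finset sum
  have hsetEq : ({j : ℕ | j ≤ 2 * F - 2} \ {n : ℕ | ¬ ∃ i j : ℕ, n = p * i + q * j})
      = (↑NF : Set ℕ) := by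
    ext n
    simp only [Set.mem_diff, Set.mem_setOf_eq, hNF, Finset.coe_filter, not_not,
      Finset.mem_range]
    constructor
    · rintro ⟨h1, h2⟩; exact ⟨by omega, h2⟩
    · rintro ⟨h1, h2⟩; exact ⟨by omega, h2⟩
  rw [hsetEq, finsum_mem_coe_finset]
  -- Step B : the gap sums
  have hgs1 := gap_sum_eq p q hp hq hpq (fun _ => (1 : ℕ)) hiff (by simpa [hF] using hle)
  have hgs2 := gap_sum_eq p q hp hq hpq (fun n => n) hiff (by simpa [hF] using hle)
  simp only [← hF] at hgs1 hgs2
  have hcardn : GF.card = ∑ t ∈ Finset.Icc 1 (p - 1), (q * t / p) := by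
    rw [hGF, Finset.card_eq_sum_ones, hgs1]
    apply Finset.sum_congr rfl
    intro t _
    rw [Finset.sum_const, smul_eq_mul, mul_one, Nat.card_Icc, Nat.add_sub_cancel]
  have hSn : (∑ n ∈ GF, n) = ∑ t ∈ Finset.Icc 1 (p - 1), ∑ k ∈ Finset.Icc 1 (q * t / p),
      (q * t - p * k) := by rw [hGF, hgs2]
  -- cast facts
  have hcp : ((p - 1 : ℕ) : ℤ) = (p : ℤ) - 1 := by omega
  have hcq : ((q - 1 : ℕ) : ℤ) = (q : ℤ) - 1 := by omega
  have hzc := zcard p q hp hq hpq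
  have hzs := zsum p q hp hq hpq
  have hcardz : ((GF.card : ℕ) : ℤ) * (2 * p) = (p : ℤ) * ((p : ℤ) - 1) * ((q : ℤ) - 1) := by
    rw [hcardn]
    push_cast
    push_cast at hzc
    linarith
  have hSz : ((∑ n ∈ GF, n : ℕ) : ℤ) * (12 * p)
      = (p : ℤ) * ((p : ℤ) - 1) * ((q : ℤ) - 1) * (2 * p * q - p - q - 1) := by
    rw [hSn]
    push_cast
    push_cast at hzs
    linarith
  have hpz : ((p : ℤ)) ≠ 0 := by exact_mod_cast Nat.pos_iff_ne_zero.mp hp0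
  have hF1z : (F : ℤ) + 1 = ((p : ℤ) - 1) * ((q : ℤ) - 1) := by
    have := congrArg (Nat.cast : ℕ → ℤ) hF1
    push_cast at this
    rw [hcp, hcq] at this
    push_cast at this
    linarith
  have e4 : ((GF.card : ℕ) : ℤ) * 2 = (F : ℤ) + 1 := by
    apply mul_right_cancel₀ hpz
    rw [hF1z]
    linear_combination hcardz
  have e12S : 12 * ((∑ n ∈ GF, n : ℕ) : ℤ)
      = ((p : ℤ) - 1) * ((q : ℤ) - 1) * (2 * (p : ℤ) * q - p - q - 1) := by
    apply mul_right_cancel₀ hpz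
    linear_combination hSz
  -- Step C : reduce RHS
  have hge : p + q + 1 ≤ 2 * p * q := by nlinarith
  have hc4 : ((2 * p * q : ℕ) : ℤ) = 2 * (p : ℤ) * q := by push_cast; ring
  have hc3 : ((2 * p * q - p - q - 1 : ℕ) : ℤ) = 2 * (p : ℤ) * q - p - q - 1 := by omega
  have hNval : (p - 1) * (q - 1) * (2 * p * q - p - q - 1) = 12 * (∑ n ∈ GF, n) := by
    have hz : (((p - 1) * (q - 1) * (2 * p * q - p - q - 1) : ℕ) : ℤ)
        = ((12 * (∑ n ∈ GF, n) : ℕ) : ℤ) := by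
      push_cast [hcp, hcq, hc3]
      rw [← Nat.cast_sum]
      linarith [e12S]
    exact_mod_cast hz
  rw [hNval, Nat.mul_div_cancel_left _ (by norm_num : 0 < 12)]
  -- Step D : split the main sum
  have hGFeq : (Finset.range (2 * F - 1)).filter (fun n => ¬ ∃ i j : ℕ, n = p * i + q * j)
      = GF := by
    ext n
    simp only [hGF, Finset.mem_filter, Finset.mem_range]
    constructor
    · rintro ⟨h1, h2⟩
      exact ⟨by have := hle n h2; omega, h2⟩
    · rintro ⟨h1, h2⟩
      exact ⟨by omega, h2⟩
  have hsplit := Finset.sum_filter_add_sum_filter_not (Finset.range (2 * F - 1))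
    (fun n => ∃ i j : ℕ, n = p * i + q * j) (fun j => 2 * F - j)
  rw [hGFeq] at hsplit
  rw [← hNF] at hsplit
  -- Step E : total sum over the range
  have h1 : ∑ j ∈ Finset.range (2 * F - 1), (2 * F - j)
      = (∑ j ∈ Finset.range (2 * F - 1), j) + 2 * (2 * F - 1) := by
    rw [← Finset.sum_range_reflect (fun j => 2 * F - j) (2 * F - 1)]
    rw [Finset.sum_congr rfl (fun j hj => (show 2 * F - (2 * F - 1 - 1 - j) = j + 2 by
      simp only [Finset.mem_range] at hj; omega))]
    rw [Finset.sum_add_distrib, Finset.sum_const, Finset.card_range, smul_eq_mul]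
    omega
  have hT0 := Finset.sum_range_id_mul_two (2 * F - 1)
  have hc1 : ((2 * F - 1 : ℕ) : ℤ) = 2 * (F : ℤ) - 1 := by omega
  have hc2 : ((2 * F - 1 - 1 : ℕ) : ℤ) = 2 * (F : ℤ) - 2 := by omega
  have hT0z : ((∑ j ∈ Finset.range (2 * F - 1), j : ℕ) : ℤ) * 2
      = (2 * (F : ℤ) - 1) * (2 * (F : ℤ) - 2) := by
    rw [← hc1, ← hc2]
    exact_mod_cast hT0
  have hTTz : ((∑ j ∈ Finset.range (2 * F - 1), (2 * F - j) : ℕ) : ℤ) * 2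
      = 4 * (F : ℤ) ^ 2 + 2 * (F : ℤ) - 2 := by
    have hthis := congrArg (Nat.cast : ℕ → ℤ) h1
    rw [Nat.cast_add, Nat.cast_mul, Nat.cast_ofNat, hc1] at hthis
    linear_combination 2 * hthis + hT0z
  -- Step F : gap weighted sum
  have hXS : (∑ n ∈ GF, (2 * F - n)) + (∑ n ∈ GF, n) = GF.card * (2 * F) := by
    rw [← Finset.sum_add_distrib]
    rw [Finset.sum_congr rfl (fun n hn => (show 2 * F - n + n = 2 * F by
      rw [hGF, Finset.mem_filter, Finset.mem_range] at hn; omega))]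
    rw [Finset.sum_const, smul_eq_mul]
  -- Step G : final assembly in ℤ
  have E1 : ((∑ j ∈ NF, (2 * F - j) : ℕ) : ℤ) + ((∑ n ∈ GF, (2 * F - n) : ℕ) : ℤ)
      = ((∑ j ∈ Finset.range (2 * F - 1), (2 * F - j) : ℕ) : ℤ) := by
    have hthis := congrArg (Nat.cast : ℕ → ℤ) hsplit
    rw [Nat.cast_add] at hthis
    exact hthis
  have E2 : ((∑ n ∈ GF, (2 * F - n) : ℕ) : ℤ) + ((∑ n ∈ GF, n : ℕ) : ℤ)
      = ((GF.card : ℕ) : ℤ) * (2 * (F : ℤ)) := by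
    have hthis := congrArg (Nat.cast : ℕ → ℤ) hXS
    have hc6 : ((2 * F : ℕ) : ℤ) = 2 * (F : ℤ) := by omega
    rw [Nat.cast_add, Nat.cast_mul, hc6] at hthis
    linarith
  have hc5 : ((F ^ 2 : ℕ) : ℤ) = (F : ℤ) ^ 2 := by push_cast; ring
  have hZ : ((∑ j ∈ NF, (2 * F - j) : ℕ) : ℤ) * 2
      = (((F ^ 2 : ℕ) : ℤ) + ((∑ n ∈ GF, n : ℕ) : ℤ) - 1) * 2 := by
    rw [hc5]
    linear_combination 2 * E1 - 2 * E2 + hTTz - 2 * (F : ℤ) * e4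
  omega
end

section
/- Let p, q ≥ 2 be coprime natural numbers and let Σ denote the sum of all elements of the gap set G(p,q) := {n ∈ ℕ : n is not of the form p·i + q·j with i, j ∈ ℕ}. Then 12Σ − (pq − p − q)² + 1 = pq(p−1)(q−1), and consequently (13Σ − ((pq−p−q)² + Σ − 1))·(2pq − p − q − 1) = 12pq·Σ. -/
open Finset


private lemma toric_gap_iff (p q : ℕ) (hp : 2 ≤ p) (hq : 2 ≤ q) (hpq : Nat.Coprime p q) (n : ℕ) :
    (¬ ∃ i j : ℕ, n = p * i + q * j) ↔
    ∃ b a : ℕ, 0 < b ∧ b < p ∧ 0 < a ∧ a < q ∧ p * a < q * b ∧ n = q * b - p * a := by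
  haveI : NeZero p := ⟨by omega⟩
  constructor
  · intro hgap
    have hn0 : n ≠ 0 := by rintro rfl; exact hgap ⟨0, 0, by ring⟩
    have hu : IsUnit (q : ZMod p) := (ZMod.isUnit_iff_coprime q p).mpr hpq.symm
    obtain ⟨b, hbp, hmod⟩ : ∃ b, b < p ∧ q * b ≡ n [MOD p] := by
      refine ⟨(↑hu.unit⁻¹ * (n : ZMod p)).val, ZMod.val_lt _, ?_⟩
      rw [← ZMod.natCast_eq_natCast_iff]
      push_cast
      rw [ZMod.natCast_rightInverse, ← mul_assoc, hu.mul_val_inv, one_mul]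
    rcases le_or_gt (q * b) n with hle | hlt
    · obtain ⟨k, hk⟩ := (Nat.modEq_iff_dvd' hle).mp hmod
      exact absurd ⟨k, b, by omega⟩ hgap
    · obtain ⟨a, ha⟩ := (Nat.modEq_iff_dvd' hlt.le).mp hmod.symm
      have ha0 : 0 < a := by rcases Nat.eq_zero_or_pos a with rfl | h; · omega
                             · exact h
      have hpa : p * a < q * b := by omega
      have hb0 : 0 < b := by
        rcases Nat.eq_zero_or_pos b with rfl | h
        · simp at hlt
        · exact h
      have haq : a < q := by
        have h1 : q * b ≤ q * (p - 1) := Nat.mul_le_mul_left q (by omega)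
        have h2 : q * (p - 1) < q * p := (Nat.mul_lt_mul_left (by omega)).mpr (by omega)
        have h4 : p * a < p * q := by rw [mul_comm p q]; omega
        exact Nat.lt_of_mul_lt_mul_left h4
      exact ⟨b, a, hb0, hbp, ha0, haq, hpa, by omega⟩
  · rintro ⟨b, a, hb0, hbp, ha0, haq, hlt, rfl⟩ ⟨i, j, hij⟩
    have hA : q * b = p * (i + a) + q * j := by rw [Nat.mul_add]; omega
    have hjb : j < b := by
      have : q * j < q * b := by
        have hpa : 0 < p * a := Nat.mul_pos (by omega) ha0
        omega
      exact Nat.lt_of_mul_lt_mul_left this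
    have hX : q * (b - j) + q * j = q * b := by rw [← Nat.mul_add]; congr 1; omega
    have hdbj : p ∣ b - j := hpq.dvd_of_dvd_mul_left ⟨i + a, by omega⟩
    have := Nat.le_of_dvd (by omega) hdbj
    omega


private lemma toric_gauss_id (n : ℕ) : 2 * ∑ b ∈ range n, (b : ℤ) = n * (n - 1) := by
  induction n with
  | zero => simp
  | succ k ih => rw [Finset.sum_range_succ]; push_cast; push_cast at ih; linear_combination ih

private lemma toric_gauss_sq (n : ℕ) :
    6 * ∑ b ∈ range n, (b : ℤ)^2 = n * (n - 1) * (2 * n - 1) := by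
  induction n with
  | zero => simp
  | succ k ih => rw [Finset.sum_range_succ]; push_cast; push_cast at ih; linear_combination ih

private lemma toric_gauss_id' (m : ℕ) : 2 * ∑ a ∈ Finset.Ioc 0 m, (a : ℤ) = m * (m + 1) := by
  induction m with
  | zero => simp
  | succ k ih =>
      rw [Finset.sum_Ioc_succ_top (Nat.zero_le _)]
      push_cast; push_cast at ih; linear_combination ih

private lemma toric_key (p q : ℕ) (hp : 2 ≤ p) (hq : 2 ≤ q) (hpq : Nat.Coprime p q)
    (S : ℕ) (hS : S = ∑ᶠ n ∈ {n : ℕ | ¬ ∃ i j : ℕ, n = p * i + q * j}, n) :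
    12 * (S : ℤ) = ((p : ℤ) - 1) * ((q : ℤ) - 1) * (2 * p * q - p - q - 1) := by
  classical
  have hp0 : 0 < p := by omega
  have hq0 : 0 < q := by omega
  -- bound on gaps
  have hbound : ∀ b a : ℕ, b < p → p * a < q * b → q * b - p * a < p * q := by
    intro b a hb hpa
    have : q * b < q * p := (Nat.mul_lt_mul_left hq0).mpr hb
    rw [mul_comm q p] at this
    omega
  set F : Finset ℕ := (range (p * q)).filter (fun n => ¬ ∃ i j : ℕ, n = p * i + q * j) with hF
  have hset : {n : ℕ | ¬ ∃ i j : ℕ, n = p * i + q * j} = ↑F := by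
    ext n
    simp only [Set.mem_setOf_eq, hF, coe_filter, mem_range, Set.mem_setOf_eq]
    constructor
    · intro h
      refine ⟨?_, h⟩
      obtain ⟨b, a, _, hbp, _, _, hlt, rfl⟩ := (toric_gap_iff p q hp hq hpq n).mp h
      exact hbound b a hbp hlt
    · exact And.right
  have hSF : S = ∑ n ∈ F, n := by
    rw [hS, hset]; exact finsum_mem_coe_finset ..
  set T : Finset (ℕ × ℕ) := ((Ioo 0 p) ×ˢ (Ioo 0 q)).filter (fun x => p * x.2 < q * x.1) with hT
  have hmemT : ∀ b a : ℕ, (b, a) ∈ T ↔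
      0 < b ∧ b < p ∧ 0 < a ∧ a < q ∧ p * a < q * b := by
    intro b a
    simp only [hT, mem_filter, mem_product, mem_Ioo]
    tauto
  have hFT : F = T.image (fun x : ℕ × ℕ => q * x.1 - p * x.2) := by
    ext n
    simp only [hF, mem_filter, mem_range, mem_image]
    constructor
    · rintro ⟨hlt, h⟩
      obtain ⟨b, a, h1, h2, h3, h4, h5, rfl⟩ := (toric_gap_iff p q hp hq hpq n).mp h
      exact ⟨(b, a), (hmemT b a).mpr ⟨h1, h2, h3, h4, h5⟩, rfl⟩
    · rintro ⟨⟨b, a⟩, hx, rfl⟩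
      obtain ⟨h1, h2, h3, h4, h5⟩ := (hmemT b a).mp hx
      exact ⟨hbound b a h2 h5, (toric_gap_iff p q hp hq hpq _).mpr ⟨b, a, h1, h2, h3, h4, h5, rfl⟩⟩
  have hinj : ∀ x ∈ T, ∀ y ∈ T, (fun x : ℕ × ℕ => q * x.1 - p * x.2) x =
      (fun x : ℕ × ℕ => q * x.1 - p * x.2) y → x = y := by
    rintro ⟨b, a⟩ hx ⟨b', a'⟩ hy h
    obtain ⟨h1, h2, h3, h4, h5⟩ := (hmemT b a).mp hx
    obtain ⟨g1, g2, g3, g4, g5⟩ := (hmemT b' a').mp hy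
    simp only at h
    have hmod : q * b ≡ q * b' [MOD p] := by
      have e1 : q * b - (q * b - p * a) = p * a := by omega
      have e2 : q * b' - (q * b' - p * a') = p * a' := by omega
      have d1 : (q * b - p * a) ≡ q * b [MOD p] := (Nat.modEq_iff_dvd' (by omega)).mpr ⟨a, e1⟩
      have d2 : (q * b' - p * a') ≡ q * b' [MOD p] := (Nat.modEq_iff_dvd' (by omega)).mpr ⟨a', e2⟩
      exact (d1.symm.trans (h ▸ d2))
    have hbb : b ≡ b' [MOD p] := Nat.ModEq.cancel_left_of_coprime hpq hmod
    have hbe : b = b' := by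
      have := hbb
      unfold Nat.ModEq at this
      rw [Nat.mod_eq_of_lt h2, Nat.mod_eq_of_lt g2] at this
      exact this
    subst hbe
    have : a = a' := by
      have : p * a = p * a' := by omega
      exact Nat.eq_of_mul_eq_mul_left hp0 this
    simp [this]
  have hST : S = ∑ x ∈ T, (q * x.1 - p * x.2) := by
    rw [hSF, hFT, Finset.sum_image hinj]
  -- cast to ℤ
  have hSZ : (S : ℤ) = ∑ x ∈ T, ((q : ℤ) * x.1 - (p : ℤ) * x.2) := by
    rw [hST, Nat.cast_sum]
    refine Finset.sum_congr rfl ?_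
    rintro ⟨b, a⟩ hx
    obtain ⟨_, _, _, _, h5⟩ := (hmemT b a).mp hx
    rw [Nat.cast_sub h5.le]
    push_cast
    ring
  -- double sum over b with inner index set Ioc 0 (q*b/p)
  have hdouble : (S : ℤ) = ∑ b ∈ Ioo 0 p,
      ∑ a ∈ Finset.Ioc 0 (q * b / p), ((q : ℤ) * b - (p : ℤ) * a) := by
    rw [hSZ, hT, Finset.sum_filter, Finset.sum_product]
    refine Finset.sum_congr rfl fun b hb => ?_
    rw [← Finset.sum_filter]
    have hb' : 0 < b ∧ b < p := by simpa using hb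
    have hnd : ¬ p ∣ q * b := by
      intro hd
      have hdb : p ∣ b := Nat.Coprime.dvd_of_dvd_mul_left hpq hd
      have := Nat.le_of_dvd hb'.1 hdb
      omega
    congr 1
    ext a
    simp only [mem_filter, mem_Ioo, mem_Ioc]
    constructor
    · rintro ⟨⟨ha0, _⟩, hlt⟩
      exact ⟨ha0, (Nat.le_div_iff_mul_le hp0).mpr (by rw [mul_comm]; omega)⟩
    · rintro ⟨ha0, ham⟩
      have h1 : a * p ≤ q * b := (Nat.le_div_iff_mul_le hp0).mp ham
      rw [mul_comm a p] at h1
      have h2 : p * a ≠ q * b := fun h => hnd ⟨a, h.symm⟩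
      have h3 : p * a < q * b := by omega
      have h4 : q * b < q * p := (Nat.mul_lt_mul_left hq0).mpr hb'.2
      have haq : a < q := by
        have h5 : p * a < p * q := by rw [mul_comm p q]; omega
        exact Nat.lt_of_mul_lt_mul_left h5
      exact ⟨⟨ha0, haq⟩, h3⟩
  -- evaluate the inner sum
  have hinner : ∀ b ∈ Ioo 0 p,
      2 * (p : ℤ) * ∑ a ∈ Finset.Ioc 0 (q * b / p), ((q : ℤ) * b - (p : ℤ) * a)
      = ((q : ℤ) * b) ^ 2 - ((q * b % p : ℕ) : ℤ) ^ 2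
        - (p : ℤ) * ((q : ℤ) * b) + (p : ℤ) * ((q * b % p : ℕ) : ℤ) := by
    intro b _
    set m := q * b / p with hm
    set r := q * b % p with hr
    have hqbn : q * b = p * m + r := (Nat.div_add_mod (q * b) p).symm
    have hqb : (q : ℤ) * b = (p : ℤ) * m + r := by exact_mod_cast hqbn
    have hg := toric_gauss_id' m
    rw [Finset.sum_sub_distrib, Finset.sum_const, ← Finset.mul_sum, Nat.card_Ioc,
      Nat.sub_zero, nsmul_eq_mul]
    linear_combination (-(p : ℤ) ^ 2) * hg + ((p : ℤ) * m + p - r - (q : ℤ) * b) * hqb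
  have h2pS : 2 * (p : ℤ) * S = ∑ b ∈ Ioo 0 p,
      (((q : ℤ) * b) ^ 2 - ((q * b % p : ℕ) : ℤ) ^ 2
        - (p : ℤ) * ((q : ℤ) * b) + (p : ℤ) * ((q * b % p : ℕ) : ℤ)) := by
    rw [hdouble, Finset.mul_sum]
    exact Finset.sum_congr rfl hinner
  -- b ↦ q*b % p permutes Ioo 0 p
  have hinj2 : ∀ x ∈ Ioo 0 p, ∀ y ∈ Ioo 0 p, q * x % p = q * y % p → x = y := by
    intro x hx y hy h
    simp only [mem_Ioo] at hx hy
    have hxy : x ≡ y [MOD p] := Nat.ModEq.cancel_left_of_coprime hpq h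
    unfold Nat.ModEq at hxy
    rw [Nat.mod_eq_of_lt hx.2, Nat.mod_eq_of_lt hy.2] at hxy
    exact hxy
  have hperm : ∀ f : ℕ → ℤ, ∑ b ∈ Ioo 0 p, f (q * b % p) = ∑ b ∈ Ioo 0 p, f b := by
    intro f
    have hsub : (Ioo 0 p).image (fun b => q * b % p) ⊆ Ioo 0 p := by
      intro c hc
      simp only [mem_image, mem_Ioo] at hc ⊢
      obtain ⟨b, ⟨hb0, hbp⟩, rfl⟩ := hc
      refine ⟨?_, Nat.mod_lt _ hp0⟩
      rcases Nat.eq_zero_or_pos (q * b % p) with h | h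
      · exfalso
        have hd : p ∣ q * b := Nat.dvd_of_mod_eq_zero h
        have hdb : p ∣ b := Nat.Coprime.dvd_of_dvd_mul_left hpq hd
        have := Nat.le_of_dvd hb0 hdb
        omega
      · exact h
    have himg : (Ioo 0 p).image (fun b => q * b % p) = Ioo 0 p := by
      apply Finset.eq_of_subset_of_card_le hsub
      rw [Finset.card_image_of_injOn (fun x hx y hy h => hinj2 x hx y hy h)]
    calc ∑ b ∈ Ioo 0 p, f (q * b % p)
        = ∑ c ∈ (Ioo 0 p).image (fun b => q * b % p), f c := (Finset.sum_image hinj2).symm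
      _ = ∑ b ∈ Ioo 0 p, f b := by rw [himg]
  have hIoo : ∀ g : ℕ → ℤ, g 0 = 0 → ∑ b ∈ Ioo 0 p, g b = ∑ b ∈ range p, g b := by
    intro g hg
    have h1 : Finset.Ioo 0 p = Finset.Ico 1 p := by ext x; simp; omega
    rw [h1, Finset.range_eq_Ico, Finset.sum_eq_sum_Ico_succ_bot hp0, hg, zero_add]
  have hB : 2 * ∑ b ∈ Ioo 0 p, (b : ℤ) = (p : ℤ) * ((p : ℤ) - 1) := by
    rw [hIoo _ (by simp)]; exact toric_gauss_id p
  have hA : 6 * ∑ b ∈ Ioo 0 p, (b : ℤ) ^ 2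
      = (p : ℤ) * ((p : ℤ) - 1) * (2 * (p : ℤ) - 1) := by
    rw [hIoo _ (by simp)]; exact toric_gauss_sq p
  have hR1 : ∑ b ∈ Ioo 0 p, ((q * b % p : ℕ) : ℤ) = ∑ b ∈ Ioo 0 p, (b : ℤ) :=
    hperm (fun n => (n : ℤ))
  have hR2 : ∑ b ∈ Ioo 0 p, ((q * b % p : ℕ) : ℤ) ^ 2 = ∑ b ∈ Ioo 0 p, (b : ℤ) ^ 2 :=
    hperm (fun n => (n : ℤ) ^ 2)
  have hsplit : ∑ b ∈ Ioo 0 p,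
      (((q : ℤ) * b) ^ 2 - ((q * b % p : ℕ) : ℤ) ^ 2
        - (p : ℤ) * ((q : ℤ) * b) + (p : ℤ) * ((q * b % p : ℕ) : ℤ))
      = (q : ℤ) ^ 2 * (∑ b ∈ Ioo 0 p, (b : ℤ) ^ 2)
        - (∑ b ∈ Ioo 0 p, ((q * b % p : ℕ) : ℤ) ^ 2)
        - (p : ℤ) * q * (∑ b ∈ Ioo 0 p, (b : ℤ))
        + (p : ℤ) * (∑ b ∈ Ioo 0 p, ((q * b % p : ℕ) : ℤ)) := by
    rw [Finset.mul_sum, Finset.mul_sum, Finset.mul_sum, ← Finset.sum_sub_distrib,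
      ← Finset.sum_sub_distrib, ← Finset.sum_add_distrib]
    exact Finset.sum_congr rfl fun b _ => by push_cast; ring
  rw [hsplit, hR1, hR2] at h2pS
  have hfin : (p : ℤ) * (12 * S)
      = (p : ℤ) * (((p : ℤ) - 1) * ((q : ℤ) - 1) * (2 * p * q - p - q - 1)) := by
    linear_combination 6 * h2pS + ((q : ℤ) ^ 2 - 1) * hA + (-3 * (p : ℤ) * ((q : ℤ) - 1)) * hB
  exact mul_left_cancel₀ (by exact_mod_cast (by omega : p ≠ 0) : (p : ℤ) ≠ 0) hfin


/-- Slope of the family of stable limits of the toric singularity `xᵖ = y^q`: with `Σ` the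
sum of the gaps of `⟨p,q⟩`, `12Σ − (pq−p−q)² + 1 = pq(p−1)(q−1)`, and consequently
`(13Σ − ((pq−p−q)² + Σ − 1))·(2pq − p − q − 1) = 12pq·Σ`. -/
theorem toric_slope (p q : ℕ) (hp : 2 ≤ p) (hq : 2 ≤ q) (hpq : Nat.Coprime p q)
    (S : ℕ) (hS : S = ∑ᶠ n ∈ {n : ℕ | ¬ ∃ i j : ℕ, n = p * i + q * j}, n) :
    12 * (S : ℤ) - ((p : ℤ) * q - p - q) ^ 2 + 1
        = (p : ℤ) * q * ((p : ℤ) - 1) * ((q : ℤ) - 1) ∧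
    (13 * (S : ℤ) - (((p : ℤ) * q - p - q) ^ 2 + (S : ℤ) - 1))
          * (2 * (p : ℤ) * q - p - q - 1)
        = 12 * (p : ℤ) * q * S := by
  have hkey := toric_key p q hp hq hpq S hS
  constructor
  · linear_combination hkey
  · linear_combination (2 * (p : ℤ) * q - p - q - 1 - (p : ℤ) * q) * hkey
end
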